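/- Let n ≥ 1 and let p < 1 be a real number. Let f : ℝⁿ → ℝ be f(x) = e^{‖x‖²} and V(y) = ‖∇f(y)‖^{p-2} ∇f(y). Then there exists R > 0 such that for every x with ‖x‖ > R, the divergence of V at x is strictly negative: div V(x) < 0. Consequently f, although convex, is not p-subharmonic on ℝⁿ for any p < 1. (Counter-Example 3.1, showing sharpness of p ≥ 1 in Theorems 1.3 and 1.4.) -/

import Mathlib

/-!
Since `∇f(y) = 2 e^{‖y‖²} y`, the field `V` is radial away from the origin:
`V(y) = φ(‖y‖²) y` with `φ(t) = 2^{p-1} e^{(p-1)t} t^{(p-2)/2}`. A radial field of this form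
has divergence `n φ(t) + 2 t φ'(t)`, which here equals `φ(t) (n + p - 2 + 2(p-1)t)`;
as `φ > 0` and `p < 1`, this is negative once `t = ‖x‖² > n / (2(1-p))`.
-/

open scoped RealInnerProductSpace Topology
open Real

section

variable {E : Type*} [NormedAddCommGroup E] [InnerProductSpace ℝ E]

theorem hasGradientAt_exp_norm_sq [CompleteSpace E] (x : E) :
    HasGradientAt (fun x : E => exp (‖x‖ ^ 2)) ((2 * exp (‖x‖ ^ 2)) • x) x := by
  rw [hasGradientAt_iff_hasFDerivAt]
  refine (hasStrictFDerivAt_norm_sq x).hasFDerivAt.exp.congr_fderiv ?_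
  ext v
  simp [InnerProductSpace.toDual_apply_apply]
  ring

noncomputable def expNormSqProfile (p t : ℝ) : ℝ :=
  2 ^ (p - 1) * exp ((p - 1) * t) * t ^ ((p - 2) / 2)

theorem norm_rpow_smul_two_exp_norm_sq_smul (p : ℝ) {y : E} (hy : y ≠ 0) :
    ‖(2 * exp (‖y‖ ^ 2)) • y‖ ^ (p - 2) • (2 * exp (‖y‖ ^ 2)) • y
      = expNormSqProfile p (‖y‖ ^ 2) • y := by
  have hr : 0 < ‖y‖ := norm_pos_iff.mpr hy
  have htwo : (2 : ℝ) ^ (p - 1) = 2 ^ (p - 2) * 2 := by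
    rw [← rpow_add_one two_ne_zero]
    ring_nf
  have hexp : exp ((p - 1) * ‖y‖ ^ 2) = exp (‖y‖ ^ 2) ^ (p - 2) * exp (‖y‖ ^ 2) := by
    rw [← exp_mul, ← exp_add]
    ring_nf
  have hpow : (‖y‖ ^ 2) ^ ((p - 2) / 2) = ‖y‖ ^ (p - 2) := by
    rw [← rpow_natCast, ← rpow_mul hr.le]
    ring_nf
  rw [norm_smul, Real.norm_eq_abs, abs_of_pos (by positivity), smul_smul, expNormSqProfile,
    htwo, hexp, hpow, mul_rpow (by positivity) hr.le, mul_rpow zero_le_two (exp_pos _).le]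
  ring_nf

end

theorem hasDerivAt_expNormSqProfile (p : ℝ) {t : ℝ} (ht : 0 < t) :
    HasDerivAt (expNormSqProfile p)
      (expNormSqProfile p t * (p - 1 + (p - 2) / (2 * t))) t := by
  have hexp : HasDerivAt (fun s => exp ((p - 1) * s)) (exp ((p - 1) * t) * (p - 1)) t := by
    simpa using ((hasDerivAt_id t).const_mul (p - 1)).exp
  have hpow := hasDerivAt_rpow_const (p := (p - 2) / 2) (Or.inl ht.ne')
  have hprod := (hexp.const_mul (2 ^ (p - 1))).mul hpow
  refine hprod.congr_deriv ?_
  rw [expNormSqProfile, rpow_sub_one ht.ne']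
  field_simp

section

variable {n : ℕ} {x : EuclideanSpace ℝ (Fin n)}

noncomputable def divergence (V : EuclideanSpace ℝ (Fin n) → EuclideanSpace ℝ (Fin n))
    (x : EuclideanSpace ℝ (Fin n)) : ℝ :=
  ∑ i : Fin n, ⟪fderiv ℝ V x (EuclideanSpace.single i 1), EuclideanSpace.single i 1⟫

theorem Filter.EventuallyEq.divergence_eq
    {V W : EuclideanSpace ℝ (Fin n) → EuclideanSpace ℝ (Fin n)} (h : V =ᶠ[𝓝 x] W) :
    divergence V x = divergence W x := by
  simp only [divergence, h.fderiv_eq]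

theorem divergence_comp_norm_sq_smul {φ : ℝ → ℝ} {φ' : ℝ} (hφ : HasDerivAt φ φ' (‖x‖ ^ 2)) :
    divergence (fun y => φ (‖y‖ ^ 2) • y) x = n * φ (‖x‖ ^ 2) + 2 * φ' * ‖x‖ ^ 2 := by
  have hV : HasFDerivAt (fun y => φ (‖y‖ ^ 2) • y) _ x :=
    (hφ.comp_hasFDerivAt x (hasStrictFDerivAt_norm_sq x).hasFDerivAt).smul (hasFDerivAt_id x)
  have hterm : ∀ i : Fin n,
      ⟪fderiv ℝ (fun y => φ (‖y‖ ^ 2) • y) x (EuclideanSpace.single i 1),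
        EuclideanSpace.single i 1⟫ = φ (‖x‖ ^ 2) + 2 * φ' * (x i * x i) := by
    intro i
    rw [hV.fderiv]
    simp [EuclideanSpace.inner_single_right]
    ring
  have hsum : ∑ i : Fin n, x i * x i = ‖x‖ ^ 2 := by
    rw [EuclideanSpace.norm_eq, sq_sqrt (by positivity)]
    simp [sq]
  simp only [divergence, hterm, Finset.sum_add_distrib, ← Finset.mul_sum, hsum]
  simp

end

theorem divergence_norm_rpow_smul_gradient_exp_norm_sq {n : ℕ} (p : ℝ)
    {x : EuclideanSpace ℝ (Fin n)} (hx : x ≠ 0) :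
    divergence (fun y => ‖gradient (fun y => exp (‖y‖ ^ 2)) y‖ ^ (p - 2) •
        gradient (fun y : EuclideanSpace ℝ (Fin n) => exp (‖y‖ ^ 2)) y) x
      = expNormSqProfile p (‖x‖ ^ 2) * (n + p - 2 + 2 * (p - 1) * ‖x‖ ^ 2) := by
  have ht : 0 < ‖x‖ ^ 2 := by positivity
  have hV : (fun y => ‖gradient (fun y => exp (‖y‖ ^ 2)) y‖ ^ (p - 2) •
      gradient (fun y : EuclideanSpace ℝ (Fin n) => exp (‖y‖ ^ 2)) y)
        =ᶠ[𝓝 x] fun y => expNormSqProfile p (‖y‖ ^ 2) • y := by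
    filter_upwards [isOpen_ne.mem_nhds hx] with y hy
    rw [(hasGradientAt_exp_norm_sq y).gradient, norm_rpow_smul_two_exp_norm_sq_smul p hy]
  rw [hV.divergence_eq, divergence_comp_norm_sq_smul (hasDerivAt_expNormSqProfile p ht)]
  field_simp
  ring

theorem exp_norm_sq_not_p_subharmonic_for_p_lt_one_general
    (n : ℕ) (p : ℝ) (hp : p < 1)
    (f : EuclideanSpace ℝ (Fin n) → ℝ)
    (hf : f = fun x => Real.exp (‖x‖ ^ 2))
    (V : EuclideanSpace ℝ (Fin n) → EuclideanSpace ℝ (Fin n))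
    (hV : V = fun y => ‖gradient f y‖ ^ (p - 2) • gradient f y) :
    ∃ R : ℝ, 0 < R ∧ ∀ x : EuclideanSpace ℝ (Fin n), R < ‖x‖ →
      ∑ i : Fin n,
          ⟪fderiv ℝ V x (EuclideanSpace.single i 1), EuclideanSpace.single i 1⟫ < 0 := by
  have hq : 0 < 2 * (1 - p) := by linarith
  refine ⟨1 + n / (2 * (1 - p)), by positivity, fun x hx => ?_⟩
  have hR : n / (2 * (1 - p)) < ‖x‖ ^ 2 := by nlinarith [div_nonneg n.cast_nonneg hq.le]
  have hx0 : x ≠ 0 := norm_pos_iff.mp (by linarith [div_nonneg n.cast_nonneg hq.le])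
  have hfactor : n + p - 2 + 2 * (p - 1) * ‖x‖ ^ 2 < 0 := by
    rw [div_lt_iff₀ hq] at hR
    linarith
  subst hf hV
  exact (divergence_norm_rpow_smul_gradient_exp_norm_sq p hx0).trans_lt
    (mul_neg_of_pos_of_neg (by unfold expNormSqProfile; positivity) hfactor)

/-- Counter-Example 3.1.  Let `p < 1`, `f(x) = e^{‖x‖²}` on
`ℝⁿ` and `V = ‖∇f‖^(p-2) ∇f`.  Then there is `R > 0` such that the divergence
of `V` (trace of its Fréchet derivative) is strictly negative at every `x`
with `‖x‖ > R`; hence `f`, although convex, is not `p`-subharmonic for `p < 1`. -/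
theorem exp_norm_sq_not_p_subharmonic_for_p_lt_one
    (n : ℕ) (hn : 1 ≤ n) (p : ℝ) (hp : p < 1)
    (f : EuclideanSpace ℝ (Fin n) → ℝ)
    (hf : f = fun x => Real.exp (‖x‖ ^ 2))
    (V : EuclideanSpace ℝ (Fin n) → EuclideanSpace ℝ (Fin n))
    (hV : V = fun y => ‖gradient f y‖ ^ (p - 2) • gradient f y) :
    ∃ R : ℝ, 0 < R ∧ ∀ x : EuclideanSpace ℝ (Fin n), R < ‖x‖ →
      ∑ i : Fin n,
          ⟪fderiv ℝ V x (EuclideanSpace.single i 1), EuclideanSpace.single i 1⟫ < 0 :=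
  exp_norm_sq_not_p_subharmonic_for_p_lt_one_general n p hp f hf V hV
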